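/- For the recursively defined automorphisms a_1 = (id,a_3), a_2 = (id,a_1)σ, a_3 = (a_2,id)σ of the binary rooted tree, the order of a_i restricted to T_n is 2^{m_{i,n}}, where the exponents satisfy the recursion m_{1,n} = m_{3,n-1}, m_{2,n} = m_{1,n-1} + 1, m_{3,n} = m_{2,n-1} + 1 with m_{1,1} = 0, m_{2,1} = m_{3,1} = 1. -/
import Mathlib


namespace TreeAut

/-- An automorphism of the infinite rooted binary tree, encoded by its portrait:
at each vertex (a finite word over `Bool`), whether the two subtrees are swapped. -/
def Port : Type := List Bool → Bool

/-- Auxiliary: the action of a tree automorphism on vertices (structural in the vertex). -/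
def actAux : List Bool → Port → List Bool
  | [], _ => []
  | b :: l, p => (xor b (p [])) :: actAux l (fun s => p (b :: s))

/-- The action of a tree automorphism on the vertices of the tree. -/
def act (p : Port) (l : List Bool) : List Bool := actAux l p

/-- Regard a function on vertices as a portrait. -/
def ofFun (f : List Bool → Bool) : Port := f

instance : One Port := ⟨fun _ => false⟩
instance : Mul Port := ⟨fun p q => ofFun fun s => xor (p s) (q (act p s))⟩

lemma one_apply (s : List Bool) : (1 : Port) s = false := rfl
lemma mul_apply (p q : Port) (s : List Bool) : (p * q) s = xor (p s) (q (act p s)) := rfl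

/-- The left subtree portrait of `p` under branch `b`. -/
def sub (p : Port) (b : Bool) : Port := ofFun fun s => p (b :: s)

lemma act_nil (p : Port) : act p [] = [] := rfl
lemma act_cons (p : Port) (b : Bool) (l : List Bool) :
    act p (b :: l) = (xor b (p [])) :: act (sub p b) l := rfl

lemma act_one : ∀ l, act (1 : Port) l = l
  | [] => rfl
  | b :: l => by
      show (xor b false) :: act (sub 1 b) l = b :: l
      have : sub 1 b = (1 : Port) := rfl
      rw [Bool.xor_false, this, act_one l]

lemma sub_mul (p q : Port) (b : Bool) : sub (p * q) b = sub p b * sub q (xor b (p [])) := rfl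

lemma act_mul : ∀ (l : List Bool) (p q : Port), act (p * q) l = act q (act p l)
  | [], _, _ => rfl
  | b :: l, p, q => by
      rw [act_cons, act_cons, act_cons, sub_mul, act_mul l]
      show (xor b (xor (p []) (q []))) :: _ = (xor (xor b (p [])) (q [])) :: _
      rw [Bool.xor_assoc]

/-- Auxiliary: the inverse action (structural in the vertex). -/
def invActAux : List Bool → Port → List Bool
  | [], _ => []
  | b :: l, p => (xor b (p [])) :: invActAux l (fun s => p ((xor b (p [])) :: s))

/-- The inverse of the action of a tree automorphism. -/
def invAct (p : Port) (l : List Bool) : List Bool := invActAux l p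

instance : Inv Port := ⟨fun p => ofFun fun s => p (invAct p s)⟩

lemma inv_apply (p : Port) (s : List Bool) : (p⁻¹ : Port) s = p (invAct p s) := rfl

lemma invAct_cons (p : Port) (b : Bool) (l : List Bool) :
    invAct p (b :: l) = (xor b (p [])) :: invAct (sub p (xor b (p []))) l := rfl

lemma invAct_act : ∀ (l : List Bool) (p : Port), invAct p (act p l) = l
  | [], _ => rfl
  | b :: l, p => by
      rw [act_cons, invAct_cons]
      have hb : xor (xor b (p [])) (p []) = b := by
        rw [Bool.xor_assoc, Bool.xor_self, Bool.xor_false]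
      rw [hb]
      exact congrArg _ (invAct_act l _)

lemma sub_inv (p : Port) (b : Bool) : sub (p⁻¹ : Port) b = (sub p (xor b (p [])))⁻¹ := by
  funext s
  show p (invAct p (b :: s)) = sub p (xor b (p [])) (invAct (sub p (xor b (p []))) s)
  rw [invAct_cons]
  rfl

lemma act_inv : ∀ (l : List Bool) (p : Port), act (p⁻¹ : Port) l = invAct p l
  | [], _ => rfl
  | b :: l, p => by
      rw [act_cons, sub_inv, act_inv l]
      have : (p⁻¹ : Port) [] = p [] := rfl
      rw [this, invAct_cons]

instance : Group Port :=
  Group.ofLeftAxioms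
    (fun p q r => by
      funext s
      show xor (xor (p s) (q (act p s))) (r (act (p * q) s))
          = xor (p s) (xor (q (act p s)) (r (act q (act p s))))
      rw [act_mul, Bool.xor_assoc])
    (fun p => by
      funext s
      show xor false (p (act 1 s)) = p s
      rw [Bool.false_xor, act_one])
    (fun p => by
      funext s
      show xor ((p⁻¹ : Port) s) (p (act (p⁻¹ : Port) s)) = false
      rw [act_inv, inv_apply, Bool.xor_self])

/-- The element `(u,v)τ` of `Aut(T) = (Aut(T) × Aut(T)) ⋊ S₂`: the automorphism acting
as `u` on the left subtree, as `v` on the right subtree, and by `τ` on the first level. -/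
def mk (u v : Port) (τ : Bool) : Port := fun s =>
  match s with
  | [] => τ
  | b :: t => if b then v t else u t

/-- `σ`, the automorphism swapping the two first-level subtrees. -/
def sigma : Port := mk 1 1 true

/-- Auxiliary structural recursion giving the portraits of the three generators. -/
def aT : List Bool → Bool × Bool × Bool
  | [] => (false, true, true)
  | b :: s => (if b then (aT s).2.2 else false,
               if b then (aT s).1 else false,
               if b then false else (aT s).2.1)

/-- The generator `a₁ = (id, a₃)`. -/
def a1 : Port := fun s => (aT s).1
/-- The generator `a₂ = (id, a₁)σ`. -/
def a2 : Port := fun s => (aT s).2.1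
/-- The generator `a₃ = (a₂, id)σ`. -/
def a3 : Port := fun s => (aT s).2.2

lemma a1_eq : a1 = mk 1 a3 false := by
  funext s
  cases s with
  | nil => rfl
  | cons b t => cases b <;> rfl

lemma a2_eq : a2 = mk 1 a1 true := by
  funext s
  cases s with
  | nil => rfl
  | cons b t => cases b <;> rfl

lemma a3_eq : a3 = mk a2 1 true := by
  funext s
  cases s with
  | nil => rfl
  | cons b t => cases b <;> rfl

lemma act_length : ∀ (l : List Bool) (p : Port), (act p l).length = l.length
  | [], _ => rfl
  | _ :: l, p => congrArg Nat.succ (act_length l _)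

lemma invAct_length : ∀ (l : List Bool) (p : Port), (invAct p l).length = l.length
  | [], _ => rfl
  | _ :: l, p => congrArg Nat.succ (invAct_length l _)

/-- The subgroup of `Aut(T)` of automorphisms acting trivially below level `n`;
it is (canonically isomorphic to) `W_n = Aut(T_n)`. -/
def W (n : ℕ) : Subgroup Port where
  carrier := {p | ∀ s : List Bool, n ≤ s.length → p s = false}
  one_mem' := fun _ _ => rfl
  mul_mem' := by
    intro p q hp hq s hs
    show xor (p s) (q (act p s)) = false
    rw [hp s hs, hq _ (by rw [act_length]; exact hs), Bool.xor_self]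
  inv_mem' := by
    intro p hp s hs
    show p (invAct p s) = false
    exact hp _ (by rw [invAct_length]; exact hs)

/-- Restriction ("truncation") of a tree automorphism to the first `n` levels. -/
def trunc (n : ℕ) (p : Port) : Port := fun s => if s.length < n then p s else false

lemma trunc_mem_W (n : ℕ) (p : Port) : trunc n p ∈ W n := by
  intro s hs
  simp only [trunc, if_neg (Nat.not_lt.mpr hs)]


/-- The exponents `(m_{1,n}, m_{2,n}, m_{3,n})`, defined by `m_{1,1} = 0`,
`m_{2,1} = m_{3,1} = 1` and the recursion `m_{1,n} = m_{3,n-1}`,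
`m_{2,n} = m_{1,n-1} + 1`, `m_{3,n} = m_{2,n-1} + 1`. -/
def mT : ℕ → ℕ × ℕ × ℕ
  | 0 => (0, 0, 0)
  | 1 => (0, 1, 1)
  | n + 2 => ((mT (n + 1)).2.2, (mT (n + 1)).1 + 1, (mT (n + 1)).2.1 + 1)

/-! ### Auxiliary lemmas for Statement 13 -/

lemma mk_apply_nil (u v : Port) (τ : Bool) : mk u v τ [] = τ := rfl

lemma mul_mk (u v u' v' : Port) (τ τ' : Bool) :
    mk u v τ * mk u' v' τ' =
      mk (u * (if τ then v' else u')) (v * (if τ then u' else v')) (xor τ τ') := by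
  funext s
  cases s with
  | nil => cases τ <;> cases τ' <;> rfl
  | cons b t => cases b <;> cases τ <;> rfl

lemma mk_one_one_false : mk 1 1 false = 1 := by
  funext s
  cases s with
  | nil => rfl
  | cons b t => cases b <;> rfl

lemma trunc_zero (p : Port) : trunc 0 p = 1 := by
  funext s
  show (if s.length < 0 then p s else false) = (1 : Port) s
  rw [one_apply, if_neg (Nat.not_lt_zero _)]

lemma trunc_mk (n : ℕ) (u v : Port) (τ : Bool) :
    trunc (n + 1) (mk u v τ) = mk (trunc n u) (trunc n v) τ := by
  funext s
  cases s with
  | nil =>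
      show (if 0 < n + 1 then τ else false) = τ
      rw [if_pos (Nat.succ_pos n)]
  | cons b t =>
      show (if t.length + 1 < n + 1 then (if b then v t else u t) else false)
          = if b then trunc n v t else trunc n u t
      cases b <;> (show _ = if t.length < n then _ else false) <;>
        by_cases h : t.length < n <;> simp [trunc, h, Nat.add_lt_add_iff_right]

lemma trunc_one (n : ℕ) : trunc n (1 : Port) = 1 := by
  funext s
  show (if s.length < n then (1 : Port) s else false) = (1 : Port) s
  rw [one_apply]; simp

/-- `v ↦ (1, v)` as a monoid hom. -/
def rightHom : Port →* Port where
  toFun v := mk 1 v false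
  map_one' := mk_one_one_false
  map_mul' v w := by rw [mul_mk]; simp

lemma rightHom_injective : Function.Injective rightHom := by
  intro v w h
  funext t
  exact congrFun h (true :: t)

/-- `u ↦ (u, u)` as a monoid hom. -/
def diagHom : Port →* Port where
  toFun u := mk u u false
  map_one' := mk_one_one_false
  map_mul' u w := by rw [mul_mk]; simp

lemma diagHom_injective : Function.Injective diagHom := by
  intro v w h
  funext t
  exact congrFun h (true :: t)

lemma orderOf_rightHom (v : Port) : orderOf (mk 1 v false) = orderOf v :=
  orderOf_injective rightHom rightHom_injective v

lemma orderOf_diag (u : Port) : orderOf (mk u u false) = orderOf u :=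
  orderOf_injective diagHom diagHom_injective u

/-- The order-doubling lemma: if `p` acts nontrivially at the root and `p²` has order
`2^k`, then `p` has order `2^(k+1)`. -/
lemma orderOf_double {p : Port} (hp : p [] = true) {k : ℕ}
    (h : orderOf (p * p) = 2 ^ k) : orderOf p = 2 ^ (k + 1) := by
  have hpp : p * p = p ^ 2 := (sq p).symm
  have h2 : (p * p) ^ (2 ^ k) = 1 := h ▸ pow_orderOf_eq_one (p * p)
  have h1 : p ^ (2 ^ (k + 1)) = 1 := by
    rw [show 2 ^ (k + 1) = 2 * 2 ^ k from by ring, pow_mul, ← hpp]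
    exact h2
  have hdvd : orderOf p ∣ 2 ^ (k + 1) := orderOf_dvd_of_pow_eq_one h1
  obtain ⟨j, hj, hje⟩ := (Nat.dvd_prime_pow Nat.prime_two).mp hdvd
  have hne : p ≠ 1 := by
    intro e
    rw [e, one_apply] at hp
    exact Bool.false_ne_true hp
  have hj1 : 1 ≤ j := by
    rcases Nat.eq_zero_or_pos j with h0 | h0
    · exfalso
      rw [h0, pow_zero] at hje
      exact hne (orderOf_eq_one_iff.mp hje)
    · exact h0
  have hpj : p ^ (2 ^ j) = 1 := hje ▸ pow_orderOf_eq_one p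
  have hlow : (p * p) ^ (2 ^ (j - 1)) = 1 := by
    rw [hpp, ← pow_mul, show 2 * 2 ^ (j - 1) = 2 ^ j from by
      rw [← pow_succ']; congr 1; omega]
    exact hpj
  have hk : 2 ^ k ∣ 2 ^ (j - 1) := h ▸ orderOf_dvd_of_pow_eq_one hlow
  have hkj : k ≤ j - 1 := (Nat.pow_dvd_pow_iff_le_right one_lt_two).mp hk
  rw [hje]
  congr 1
  omega

/-- The order of `aᵢ` restricted to `T_n` is `2^{m_{i,n}}`, where the
exponents satisfy `m_{1,1} = 0`, `m_{2,1} = m_{3,1} = 1` and the recursion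
`m_{1,n} = m_{3,n-1}`, `m_{2,n} = m_{1,n-1} + 1`, `m_{3,n} = m_{2,n-1} + 1`. -/
theorem orderOf_generators_restricted (n : ℕ) (hn : 1 ≤ n) :
    orderOf (trunc n a1) = 2 ^ (mT n).1 ∧
    orderOf (trunc n a2) = 2 ^ (mT n).2.1 ∧
    orderOf (trunc n a3) = 2 ^ (mT n).2.2 := by
  induction n, hn using Nat.le_induction with
  | base =>
      have h1 : trunc 1 a1 = 1 := by
        rw [a1_eq, show (1 : ℕ) = 0 + 1 from rfl, trunc_mk, trunc_zero, trunc_zero,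
          mk_one_one_false]
      have h2 : trunc 1 a2 = mk 1 1 true := by
        rw [a2_eq, show (1 : ℕ) = 0 + 1 from rfl, trunc_mk, trunc_zero, trunc_zero]
      have h3 : trunc 1 a3 = mk 1 1 true := by
        rw [a3_eq, show (1 : ℕ) = 0 + 1 from rfl, trunc_mk, trunc_zero, trunc_zero]
      have hsq : orderOf (mk 1 1 true * mk 1 1 true) = 2 ^ 0 := by
        rw [mul_mk]
        simp [mk_one_one_false]
      have hord : orderOf (mk (1 : Port) 1 true) = 2 ^ 1 := orderOf_double rfl hsq
      refine ⟨?_, ?_, ?_⟩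
      · rw [h1, orderOf_one]; rfl
      · rw [h2, hord]; rfl
      · rw [h3, hord]; rfl
  | succ n hn ih =>
      obtain ⟨ih1, ih2, ih3⟩ := ih
      obtain ⟨m, rfl⟩ : ∃ m, n = m + 1 := ⟨n - 1, by omega⟩
      have hmT : mT (m + 1 + 1) =
          ((mT (m + 1)).2.2, (mT (m + 1)).1 + 1, (mT (m + 1)).2.1 + 1) := rfl
      refine ⟨?_, ?_, ?_⟩
      · rw [a1_eq, trunc_mk, trunc_one, orderOf_rightHom, ih3, hmT]
      · have he : trunc (m + 1 + 1) a2 = mk 1 (trunc (m + 1) a1) true := by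
          rw [a2_eq, trunc_mk, trunc_one]
        have hsq : orderOf (mk 1 (trunc (m + 1) a1) true * mk 1 (trunc (m + 1) a1) true)
            = 2 ^ (mT (m + 1)).1 := by
          rw [mul_mk]
          simp only [if_true, Bool.xor_self, one_mul, mul_one]
          rw [orderOf_diag, ih1]
        rw [he, orderOf_double rfl hsq, hmT]
      · have he : trunc (m + 1 + 1) a3 = mk (trunc (m + 1) a2) 1 true := by
          rw [a3_eq, trunc_mk, trunc_one]
        have hsq : orderOf (mk (trunc (m + 1) a2) 1 true * mk (trunc (m + 1) a2) 1 true)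
            = 2 ^ (mT (m + 1)).2.1 := by
          rw [mul_mk]
          simp only [if_true, Bool.xor_self, one_mul, mul_one]
          rw [orderOf_diag, ih2]
        rw [he, orderOf_double rfl hsq, hmT]

end TreeAut
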